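/- arXiv:1309.2998 — 2 statements merged into one kernel-verified Lean document; each statement's English description precedes it below -/
import Mathlib

section
/- There exist fields ℚ ⊆ K ⊆ L ⊆ \overline{ℚ} such that K/ℚ is an infinite algebraic extension, K does not satisfy the Bogomolov property (B), the extension L/K is infinite, and L/K is not Bogomolov. -/
open NumberField IntermediateField
open scoped Classical

noncomputable section

namespace RelBogomolov

/-- The "denominator ideal" of an element `x` of a field `K`: the ideal of integers `a` of `K`
such that `a * x` is an algebraic integer.  For a number field `K`, the logarithm of its absolute
norm is the finite (non-archimedean) part `∑_{v finite} log max (1, |x|_v)` of the Weil height. -/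
def denomIdeal (K : Type*) [Field K] (x : K) : Ideal (𝓞 K) where
  carrier := {a | IsIntegral ℤ ((a : K) * x)}
  add_mem' := by
    intro a b ha hb
    have := ha.add hb
    simpa [add_mul] using this
  zero_mem' := by
    simpa using isIntegral_zero
  smul_mem' := by
    intro c a ha
    have hc : IsIntegral ℤ (c : K) := RingOfIntegers.isIntegral_coe c
    simpa [smul_eq_mul, mul_assoc] using hc.mul ha

/-- The absolute logarithmic Weil height of an element of a number field `K`:
`h(x) = (1/[K:ℚ]) (∑_{v archimedean} [K_v : ℚ_v] log max (1, |x|_v)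
          + ∑_{v finite} [K_v : ℚ_v] log max (1, |x|_v))`,
where the finite part is expressed as the log of the absolute norm of the denominator ideal. -/
def nfHeight (K : Type*) [Field K] [NumberField K] (x : K) : ℝ :=
  (Module.finrank ℚ K : ℝ)⁻¹ *
    ((∑ w : InfinitePlace K, (w.mult : ℝ) * Real.log (max 1 (w x))) +
      Real.log (Ideal.absNorm (denomIdeal K x)))

/-- The absolute logarithmic Weil height of a complex number that is algebraic over `ℚ`,
computed in the number field `ℚ(x)` (junk value `0` for transcendental numbers). -/
def algHeight (x : ℂ) : ℝ :=
  if hx : IsIntegral ℚ x then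
    letI : FiniteDimensional ℚ ℚ⟮x⟯ := adjoin.finiteDimensional hx
    haveI : CharZero ℚ⟮x⟯ := charZero_of_injective_algebraMap (algebraMap ℚ ℚ⟮x⟯).injective
    haveI : NumberField ℚ⟮x⟯ := ⟨⟩
    nfHeight ℚ⟮x⟯ (AdjoinSimple.gen ℚ x)
  else 0

/-- The multiplicative Weil height `H(x) = exp h(x)`. -/
def mulHeight (x : ℂ) : ℝ := Real.exp (algHeight x)

/-- A fixed algebraic closure of `ℚ`: the field of algebraic numbers inside `ℂ`. -/
def Qbar : IntermediateField ℚ ℂ := _root_.algebraicClosure ℚ ℂ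

/-- A subfield `K` of `ℚ̄` has the Bogomolov property (B) if there is `ε > 0` such that no
nonzero element of `K` has height strictly between `0` and `ε`. -/
def HasBogomolovProperty (K : IntermediateField ℚ ℂ) : Prop :=
  ∃ ε : ℝ, 0 < ε ∧ ∀ x : ℂ, x ∈ K → x ≠ 0 → ¬(0 < algHeight x ∧ algHeight x < ε)

/-- The extension `L/K` is Bogomolov if there is `ε > 0` such that every nonzero `x ∈ L`
with `0 < h(x) < ε` lies in `K`. -/
def IsBogomolovExtension (K L : IntermediateField ℚ ℂ) : Prop :=
  ∃ ε : ℝ, 0 < ε ∧ ∀ x : ℂ, x ∈ L → x ≠ 0 → 0 < algHeight x → algHeight x < ε → x ∈ K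

/-- `δ(M)`: the number of archimedean places of `M` (junk value `0` in the infinite case). -/
def archPlaces (M : IntermediateField ℚ ℂ) : ℕ :=
  if h : FiniteDimensional ℚ ↥M then
    letI := h
    haveI : CharZero ↥M := charZero_of_injective_algebraMap (algebraMap ℚ ↥M).injective
    haveI : NumberField ↥M := ⟨⟩
    Fintype.card (InfinitePlace ↥M)
  else 0

/-- The absolute norm `N_{F/ℚ}` of an ideal of the ring of integers of a subfield `F ⊆ ℚ̄`
(junk value `0` in the infinite case). -/
def idealNorm {F : IntermediateField ℚ ℂ} (I : Ideal (𝓞 ↥F)) : ℕ :=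
  if h : FiniteDimensional ℚ ↥F then
    letI := h
    haveI : CharZero ↥F := charZero_of_injective_algebraMap (algebraMap ℚ ↥F).injective
    haveI : NumberField ↥F := ⟨⟩
    Ideal.absNorm I
  else 0

/-- The relative discriminant ideal `D_{F'/F}` of an extension of number fields, defined as
the ideal of `𝓞 F` generated by the discriminants of all `[F':F]`-tuples of integers of `F'`. -/
def relDiscrNF (F F' : Type*) [Field F] [Field F'] [Algebra F F'] : Ideal (𝓞 F) :=
  Ideal.span {d : 𝓞 F | ∃ x : Fin (Module.finrank F F') → 𝓞 F', d = Algebra.discr (𝓞 F) x}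

/-- The relative discriminant ideal `D_{C/F}` for subfields `F ≤ C` of `ℚ̄`
(junk value `⊥` if `F ≰ C`). -/
def relDiscr (F C : IntermediateField ℚ ℂ) : Ideal (𝓞 ↥F) :=
  if h : F ≤ C then
    letI : Algebra ↥F ↥C := (IntermediateField.inclusion h).toAlgebra
    relDiscrNF ↥F ↥C
  else ⊥

/-- The inclusion `𝓞 F →+* 𝓞 M` of rings of integers induced by an inclusion `F ≤ M` of
subfields of `ℚ̄`. -/
def intInclusion {F M : IntermediateField ℚ ℂ} (h : F ≤ M) : 𝓞 ↥F →+* 𝓞 ↥M :=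
  RingOfIntegers.mapRingHom (IntermediateField.inclusion h)

/-- `ρ(K/F)`: the least real number `ρ` such that every finite subextension `M` of `K/F` is
contained in a finite subextension `M'` of `K/F` with `δ(M')/[M':F] ≤ ρ`. -/
def rho (F K : IntermediateField ℚ ℂ) : ℝ :=
  sInf {r : ℝ | ∀ M : IntermediateField ℚ ℂ, F ≤ M → M ≤ K → FiniteDimensional ℚ ↥M →
    ∃ M' : IntermediateField ℚ ℂ, M ≤ M' ∧ M' ≤ K ∧ FiniteDimensional ℚ ↥M' ∧
      (archPlaces M' : ℝ) / (relfinrank F M' : ℝ) ≤ r}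

/-- The norm excess discriminant `E(K, C/F)`: the infimum over finite subextensions `M` of
`K/F` (with `e = [M:F]`, `s = [C:F]`) of
`N_{F/ℚ}(D_{C/F}^e / gcd(D_{C/F}^e, D_{M/F}^s))^{1/e}`; here the gcd of two ideals is their
sup, and the norm of the quotient ideal is the quotient of the norms. -/
def normExcess (K F C : IntermediateField ℚ ℂ) : ℝ :=
  sInf {r : ℝ | ∃ M : IntermediateField ℚ ℂ, F ≤ M ∧ M ≤ K ∧ FiniteDimensional ℚ ↥M ∧
    r = ((idealNorm ((relDiscr F C) ^ (relfinrank F M)) : ℝ) /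
          (idealNorm ((relDiscr F C) ^ (relfinrank F M) ⊔ (relDiscr F M) ^ (relfinrank F C)) : ℝ))
        ^ ((relfinrank F M : ℝ)⁻¹)}

/-- `a(𝔭)`: the greatest `k` such that `x^ℓ ≡ α (mod 𝔭^k)` has a solution `x ∈ 𝓞 F`. -/
def aExp (F : Type*) [Field F] (ℓ : ℕ) (α : 𝓞 F) (𝔭 : Ideal (𝓞 F)) : ℕ :=
  sSup {k : ℕ | ∃ x : 𝓞 F, x ^ ℓ - α ∈ 𝔭 ^ k}

end RelBogomolov

open RelBogomolov

/-!
Take `K = ℚ(2^(1/3^k) : k ∈ ℕ) ⊆ ℝ` and `L = K(i, 2^(1/5^k) : k ∈ ℕ)`. Since `2^(1/3^k) ∈ K` and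
`i·2^(1/5^k) ∈ L \ K` have heights `log 2 / 3^k` and `log 2 / 5^k`, neither `K` nor `L/K` is
Bogomolov. As `X^n - 2` is irreducible over `ℚ` for odd `n`, `K` has elements of every degree `3^k`.
Over `K`, the minimal polynomial of `2^(1/5^k)` has its coefficients in some `ℚ(2^(1/3^m))`, whose
degree `3^m` is prime to `5^k`, so its degree is at least `5^k`; hence `L/K` is infinite.
-/

open Polynomial Module

namespace IntermediateField

variable {F E : Type*} [Field F] [Field E] [Algebra F E]

theorem exists_natDegree_minpoly_le_of_directed {ι : Type*} [Nonempty ι]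
    {t : ι → IntermediateField F E} (dir : Directed (· ≤ ·) t) {α : E}
    (hα : IsIntegral (⨆ i, t i : IntermediateField F E) α) :
    ∃ i, (minpoly (t i) α).natDegree ≤
      (minpoly (⨆ i, t i : IntermediateField F E) α).natDegree := by
  set K := ⨆ i, t i
  set p := (minpoly K α).map (algebraMap K E)
  have hcoeff : ∀ c ∈ p.coeffs, ∃ i, c ∈ t i := by
    intro c hc
    obtain ⟨n, -, rfl⟩ := mem_coeffs_iff.mp hc
    have := ((minpoly K α).coeff n).2
    rw [← SetLike.mem_coe, coe_iSup_of_directed dir, Set.mem_iUnion] at this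
    simpa [p] using this
  choose! j hj using hcoeff
  obtain ⟨i, hi⟩ := dir.finset_le (p.coeffs.image j)
  have hlifts : p ∈ lifts (algebraMap (t i) E) := by
    refine (lifts_iff_coeffs_subset_range p).mpr fun c hc ↦ ?_
    exact ⟨⟨c, hi _ (Finset.mem_image_of_mem _ hc) (hj c hc)⟩, rfl⟩
  obtain ⟨q, hqp, hqdeg, hqmonic⟩ :=
    lifts_and_natDegree_eq_and_monic hlifts ((minpoly.monic hα).map _)
  have hq : aeval α q = 0 := by
    rw [aeval_def, eval₂_eq_eval_map, hqp, eval_map_algebraMap, minpoly.aeval]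
  refine ⟨i, ?_⟩
  calc (minpoly (t i) α).natDegree ≤ q.natDegree :=
        natDegree_le_of_dvd (minpoly.dvd _ _ hq) hqmonic.ne_zero
    _ = _ := by rw [hqdeg, natDegree_map]

theorem natDegree_minpoly_dvd_of_coprime (A : IntermediateField F E) [FiniteDimensional F A]
    {θ : E} (hθ : IsIntegral F θ) (hcop : (minpoly F θ).natDegree.Coprime (finrank F A)) :
    (minpoly F θ).natDegree ∣ (minpoly A θ).natDegree := by
  have htower : finrank F A * (minpoly A θ).natDegree = finrank F A⟮θ⟯ := by
    rw [← adjoin.finrank hθ.tower_top]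
    exact Module.finrank_mul_finrank F A A⟮θ⟯
  have hdvd : (minpoly F θ).natDegree ∣ finrank F A⟮θ⟯ := by
    rw [← adjoin.finrank hθ]
    have hle : F⟮θ⟯ ≤ A⟮θ⟯.restrictScalars F :=
      adjoin_simple_le_iff.mpr (mem_adjoin_simple_self A θ)
    exact finrank_dvd_of_le_right hle
  exact hcop.dvd_of_dvd_mul_left (htower ▸ hdvd)

end IntermediateField

theorem isIntegral_of_pow_eq_natCast {R : Type*} [CommRing R] {x : R} {n N : ℕ} (hn : n ≠ 0)
    (hx : x ^ n = N) : IsIntegral ℤ x :=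
  ⟨X ^ n - C (N : ℤ), monic_X_pow_sub_C _ hn, by simp [hx]⟩

theorem rat_pow_ne_two {p : ℕ} (hp : 2 ≤ p) (b : ℚ) : b ^ p ≠ 2 := by
  intro h
  have hv := congrArg (padicValRat 2) h
  have h2 : padicValRat 2 2 = 1 := by exact_mod_cast padicValRat.self (p := 2) one_lt_two
  rw [padicValRat.pow, h2] at hv
  have := Int.eq_one_of_mul_eq_one_right (by positivity) hv
  omega

namespace RelBogomolov

def rootTwo (n : ℕ) : ℂ := ((2 : ℝ) ^ (n : ℝ)⁻¹ : ℝ)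

theorem rootTwo_ne_zero (n : ℕ) : rootTwo n ≠ 0 := by
  simp only [rootTwo, ne_eq, Complex.ofReal_eq_zero]
  positivity

theorem rootTwo_pow {n : ℕ} (hn : n ≠ 0) : rootTwo n ^ n = 2 := by
  rw [rootTwo, ← Complex.ofReal_pow, Real.rpow_inv_natCast_pow zero_le_two hn]
  norm_num

theorem rootTwo_mul_pow {m c : ℕ} (hc : c ≠ 0) : rootTwo (m * c) ^ c = rootTwo m := by
  rw [rootTwo, rootTwo, ← Complex.ofReal_pow, ← Real.rpow_natCast, ← Real.rpow_mul zero_le_two]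
  rcases eq_or_ne m 0 with rfl | hm
  · simp
  · congr 2
    push_cast
    field_simp

theorem denomIdeal_eq_top {K : Type*} [Field K] {x : K} (hx : IsIntegral ℤ x) :
    denomIdeal K x = ⊤ :=
  (Ideal.eq_top_iff_one _).mpr (show IsIntegral ℤ (((1 : 𝓞 K) : K) * x) by simpa using hx)

theorem nfHeight_of_pow_eq_natCast {K : Type*} [Field K] [NumberField K] {x : K} {n N : ℕ}
    (hn : n ≠ 0) (hN : 1 ≤ N) (hx : x ^ n = N) : nfHeight K x = Real.log N / n := by
  set c : ℝ := (N : ℝ) ^ (n : ℝ)⁻¹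
  have hw (w : InfinitePlace K) : w x = c := by
    have hpow : w x ^ n = N := by
      rw [← map_pow, hx, ← InfinitePlace.norm_embedding_eq, map_natCast, Complex.norm_natCast]
    rw [← Real.pow_rpow_inv_natCast (apply_nonneg w x) hn, hpow]
  have hc : 1 ≤ c := Real.one_le_rpow (by exact_mod_cast hN) (by positivity)
  have hsum : ∑ w : InfinitePlace K, (w.mult : ℝ) * Real.log (max 1 (w x)) =
      finrank ℚ K * Real.log c := by
    simp only [hw, max_eq_right hc]
    rw [← Finset.sum_mul, ← Nat.cast_sum, InfinitePlace.sum_mult_eq]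
  rw [nfHeight, hsum, denomIdeal_eq_top (isIntegral_of_pow_eq_natCast hn hx), Ideal.absNorm_top,
    Nat.cast_one, Real.log_one, add_zero, inv_mul_cancel_left₀ (Nat.cast_pos.mpr finrank_pos).ne',
    Real.log_rpow (by positivity), inv_mul_eq_div]

theorem algHeight_of_pow_eq_natCast {x : ℂ} {n N : ℕ} (hn : n ≠ 0) (hN : 1 ≤ N)
    (hx : x ^ n = N) : algHeight x = Real.log N / n := by
  have hx' : IsIntegral ℚ x := (isIntegral_of_pow_eq_natCast hn hx).tower_top
  have : FiniteDimensional ℚ ℚ⟮x⟯ := adjoin.finiteDimensional hx'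
  have : CharZero ℚ⟮x⟯ := charZero_of_injective_algebraMap (algebraMap ℚ ℚ⟮x⟯).injective
  have : NumberField ℚ⟮x⟯ := ⟨⟩
  rw [algHeight, dif_pos hx']
  exact nfHeight_of_pow_eq_natCast hn hN (Subtype.ext (by simp [hx]))

theorem algHeight_rootTwo {n : ℕ} (hn : n ≠ 0) : algHeight (rootTwo n) = Real.log 2 / n := by
  rw [algHeight_of_pow_eq_natCast hn one_le_two (by rw [rootTwo_pow hn]; norm_num)]
  norm_num

theorem algHeight_I_mul_rootTwo {n : ℕ} (hn : n ≠ 0) :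
    algHeight (Complex.I * rootTwo n) = Real.log 2 / n := by
  have hpow : (Complex.I * rootTwo n) ^ (4 * n) = (16 : ℕ) := by
    rw [mul_pow, pow_mul, Complex.I_pow_four, one_pow, one_mul, mul_comm, pow_mul, rootTwo_pow hn]
    norm_num
  rw [algHeight_of_pow_eq_natCast (by positivity) (by norm_num) hpow,
    show ((16 : ℕ) : ℝ) = 2 ^ 4 by norm_num, Real.log_pow]
  push_cast
  field_simp

theorem minpoly_rootTwo {n : ℕ} (hn : Odd n) : minpoly ℚ (rootTwo n) = X ^ n - C 2 := by
  have hn0 : n ≠ 0 := hn.pos.ne'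
  refine (minpoly.eq_of_irreducible_of_monic ?_ ?_ (monic_X_pow_sub_C _ hn0)).symm
  · exact X_pow_sub_C_irreducible_of_odd hn fun p hp _ ↦ rat_pow_ne_two hp.two_le
  · simp [rootTwo_pow hn0]

theorem natDegree_minpoly_rootTwo {n : ℕ} (hn : Odd n) :
    (minpoly ℚ (rootTwo n)).natDegree = n := by
  rw [minpoly_rootTwo hn, natDegree_X_pow_sub_C]

theorem isIntegral_rootTwo {n : ℕ} (hn : n ≠ 0) : IsIntegral ℚ (rootTwo n) :=
  (isIntegral_of_pow_eq_natCast (N := 2) hn (by rw [rootTwo_pow hn]; norm_num)).tower_top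

def realField : IntermediateField ℚ ℂ where
  carrier := {z | z.im = 0}
  mul_mem' {a b} ha hb := by simp_all [Complex.mul_im]
  add_mem' {a b} ha hb := by simp_all
  algebraMap_mem' q := by simp
  inv_mem' a ha := by simp_all

def rootTwoTower (p : ℕ) : IntermediateField ℚ ℂ := ⨆ k, ℚ⟮rootTwo (p ^ k)⟯

variable {p : ℕ}

theorem rootTwo_pow_mem_rootTwoTower (k : ℕ) : rootTwo (p ^ k) ∈ rootTwoTower p :=
  le_iSup (fun k ↦ ℚ⟮rootTwo (p ^ k)⟯) k (mem_adjoin_simple_self ℚ _)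

theorem monotone_adjoin_rootTwo_pow (hp : p ≠ 0) : Monotone fun k ↦ ℚ⟮rootTwo (p ^ k)⟯ := by
  intro a b hab
  refine adjoin_simple_le_iff.mpr ?_
  rw [← rootTwo_mul_pow (pow_ne_zero (b - a) hp), ← pow_add, Nat.add_sub_cancel' hab]
  exact pow_mem (mem_adjoin_simple_self ℚ _) _

theorem rootTwoTower_le_realField : rootTwoTower p ≤ realField :=
  iSup_le fun _ ↦ adjoin_simple_le_iff.mpr (Complex.ofReal_im _)

theorem rootTwoTower_le_Qbar (hp : p ≠ 0) : rootTwoTower p ≤ Qbar :=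
  iSup_le fun k ↦ adjoin_simple_le_iff.mpr <|
    mem_algebraicClosure_iff'.mpr (isIntegral_rootTwo (pow_ne_zero k hp))

theorem exists_log_two_div_pow_lt (hp : 1 < p) {ε : ℝ} (hε : 0 < ε) :
    ∃ k, Real.log 2 / ((p ^ k : ℕ) : ℝ) < ε := by
  obtain ⟨k, hk⟩ := pow_unbounded_of_one_lt (Real.log 2 / ε) (by exact_mod_cast hp : (1 : ℝ) < p)
  refine ⟨k, ?_⟩
  rw [div_lt_iff₀ hε] at hk
  rw [div_lt_iff₀ (by positivity), Nat.cast_pow, mul_comm]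
  exact hk

theorem not_hasBogomolovProperty_rootTwoTower (hp : 1 < p) :
    ¬ HasBogomolovProperty (rootTwoTower p) := by
  rintro ⟨ε, hε, hsmall⟩
  obtain ⟨k, hk⟩ := exists_log_two_div_pow_lt hp hε
  have hpk : p ^ k ≠ 0 := by positivity
  refine hsmall _ (rootTwo_pow_mem_rootTwoTower k) (rootTwo_ne_zero _) ⟨?_, ?_⟩ <;>
    rw [algHeight_rootTwo hpk]
  · positivity
  · exact hk

theorem not_finiteDimensional_rootTwoTower (hp : Odd p) (hp1 : 1 < p) :
    ¬ FiniteDimensional ℚ (rootTwoTower p) := by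
  intro hfin
  set N := finrank ℚ (rootTwoTower p)
  have hle : (minpoly ℚ (rootTwo (p ^ N))).natDegree ≤ N :=
    IntermediateField.minpoly_eq (⟨_, rootTwo_pow_mem_rootTwoTower N⟩ : rootTwoTower p) ▸
      minpoly.natDegree_le _
  rw [natDegree_minpoly_rootTwo hp.pow] at hle
  exact (Nat.lt_pow_self hp1).not_ge hle

theorem pow_le_natDegree_minpoly_rootTwo {q : ℕ} (hp : Odd p) (hq : Odd q) (hpq : p.Coprime q)
    (m k : ℕ) : q ^ k ≤ (minpoly ℚ⟮rootTwo (p ^ m)⟯ (rootTwo (q ^ k))).natDegree := by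
  have hθ : IsIntegral ℚ (rootTwo (q ^ k)) := isIntegral_rootTwo (pow_ne_zero k hq.pos.ne')
  have hA : IsIntegral ℚ (rootTwo (p ^ m)) := isIntegral_rootTwo (pow_ne_zero m hp.pos.ne')
  have : FiniteDimensional ℚ ℚ⟮rootTwo (p ^ m)⟯ := adjoin.finiteDimensional hA
  have hcop : (minpoly ℚ (rootTwo (q ^ k))).natDegree.Coprime (finrank ℚ ℚ⟮rootTwo (p ^ m)⟯) := by
    rw [natDegree_minpoly_rootTwo hq.pow, adjoin.finrank hA, natDegree_minpoly_rootTwo hp.pow]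
    exact (hpq.pow m k).symm
  have hdvd := natDegree_minpoly_dvd_of_coprime _ hθ hcop
  rw [natDegree_minpoly_rootTwo hq.pow] at hdvd
  exact Nat.le_of_dvd (minpoly.natDegree_pos hθ.tower_top) hdvd

theorem not_finiteDimensional_extendScalars_rootTwoTower {q : ℕ} (hp : Odd p) (hq : Odd q)
    (hq1 : 1 < q) (hpq : p.Coprime q) {L : IntermediateField ℚ ℂ} (hKL : rootTwoTower p ≤ L)
    (hL : ∀ k, rootTwo (q ^ k) ∈ L) : ¬ FiniteDimensional (rootTwoTower p) (extendScalars hKL) := by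
  intro hfin
  set d := finrank (rootTwoTower p) (extendScalars hKL)
  obtain ⟨k, hk⟩ : ∃ k, d < q ^ k := ⟨d, Nat.lt_pow_self hq1⟩
  have : Module.Free (rootTwoTower p) (extendScalars hKL) := .of_divisionRing _ _
  have hdeg : (minpoly (rootTwoTower p) (rootTwo (q ^ k))).natDegree ≤ d :=
    IntermediateField.minpoly_eq (⟨_, hL k⟩ : extendScalars hKL) ▸ minpoly.natDegree_le _
  have hθ : IsIntegral (rootTwoTower p) (rootTwo (q ^ k)) :=
    (isIntegral_rootTwo (pow_ne_zero k hq.pos.ne')).tower_top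
  obtain ⟨m, hm⟩ : ∃ m, (minpoly ℚ⟮rootTwo (p ^ m)⟯ (rootTwo (q ^ k))).natDegree ≤
      (minpoly (rootTwoTower p) (rootTwo (q ^ k))).natDegree :=
    exists_natDegree_minpoly_le_of_directed (monotone_adjoin_rootTwo_pow hp.pos.ne').directed_le hθ
  have := pow_le_natDegree_minpoly_rootTwo hp hq hpq m k
  omega

theorem not_isBogomolovExtension_of_I_mul_rootTwo_mem {q : ℕ} (hq1 : 1 < q)
    {K L : IntermediateField ℚ ℂ} (hK : K ≤ realField)
    (hL : ∀ k, Complex.I * rootTwo (q ^ k) ∈ L) : ¬ IsBogomolovExtension K L := by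
  rintro ⟨ε, hε, hsmall⟩
  obtain ⟨k, hk⟩ := exists_log_two_div_pow_lt hq1 hε
  have hqk : q ^ k ≠ 0 := by positivity
  have hxK := hsmall _ (hL k) (mul_ne_zero Complex.I_ne_zero (rootTwo_ne_zero _))
    (by rw [algHeight_I_mul_rootTwo hqk]; positivity) (by rwa [algHeight_I_mul_rootTwo hqk])
  have him : (Complex.I * rootTwo (q ^ k)).im = 0 := hK hxK
  simp only [rootTwo, Complex.mul_im, Complex.I_re, Complex.ofReal_im, Complex.I_im,
    Complex.ofReal_re, zero_mul, one_mul, zero_add] at him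
  exact (by positivity : (0 : ℝ) < _).ne' him

end RelBogomolov

/-- There exist `ℚ ⊆ K ⊆ L ⊆ ℚ̄` with `K/ℚ` infinite, `K` failing (B), and `L/K` an infinite
extension which is not Bogomolov. -/
theorem exists_infinite_not_bogomolovExtension :
    ∃ (K L : IntermediateField ℚ ℂ) (hKL : K ≤ L), L ≤ Qbar ∧
      ¬ FiniteDimensional ℚ ↥K ∧ ¬ HasBogomolovProperty K ∧
      ¬ FiniteDimensional ↥K ↥(extendScalars hKL) ∧
      ¬ IsBogomolovExtension K L := by
  set L := rootTwoTower 3 ⊔ ℚ⟮Complex.I⟯ ⊔ rootTwoTower 5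
  have hKL : rootTwoTower 3 ≤ L := le_sup_left.trans le_sup_left
  have hI : Complex.I ∈ L :=
    (le_sup_right.trans le_sup_left : ℚ⟮Complex.I⟯ ≤ L) (mem_adjoin_simple_self ℚ _)
  have h5 (k : ℕ) : rootTwo (5 ^ k) ∈ L :=
    (le_sup_right : rootTwoTower 5 ≤ L) (rootTwo_pow_mem_rootTwoTower k)
  have hIQbar : Complex.I ∈ Qbar :=
    (isIntegral_of_pow_eq_natCast (N := 1) four_ne_zero (by simp)).tower_top
  refine ⟨rootTwoTower 3, L, hKL, ?_, not_finiteDimensional_rootTwoTower (by decide) (by norm_num),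
    not_hasBogomolovProperty_rootTwoTower (by norm_num),
    not_finiteDimensional_extendScalars_rootTwoTower (by decide) (by decide) (by norm_num)
      (by norm_num) hKL h5,
    not_isBogomolovExtension_of_I_mul_rootTwo_mem (by norm_num) rootTwoTower_le_realField
      fun k ↦ mul_mem hI (h5 k)⟩
  exact sup_le (sup_le (rootTwoTower_le_Qbar three_ne_zero) (adjoin_simple_le_iff.mpr hIQbar))
    (rootTwoTower_le_Qbar (by norm_num))
end
end

section
/- Let K = ⋃_{n≥1} ℚ(3^{1/3^n}) ⊆ \overline{ℚ}, where 3^{1/3^n} denotes the positive real 3^n-th root of 3 (so the roots are chosen compatibly: (3^{1/3^{n+1}})^3 = 3^{1/3^n}). Then every subfield k with ℚ ⊆ k ⊊ K equals ℚ(3^{1/3^i}) for some i ≥ 0; in particular every proper subfield of K is a finite extension of ℚ, and K is not a Bogomolov extension of any proper subfield of itself. -/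
open NumberField IntermediateField
open scoped Classical

noncomputable section

open RelBogomolov

/-!
Fix an odd prime `p` (here `p = 3`) and let `αₙ = p^{1/p^n}`, whose minimal polynomial over `ℚ`
is `X^{p^n} - p`. Every conjugate `β` of `αₙ`, over any subfield of `ℂ`, satisfies
`β^{p^n} = p` and so has absolute value `αₙ`. Hence for `k ⊆ ℚ(αₙ)` of degree `p^j` the norm
`N_{ℚ(αₙ)/k}(αₙ)` is an element of the real field `k` of absolute value `αₙ^{p^{n-j}} = αⱼ`,
so `αⱼ ∈ k` and `k = ℚ(αⱼ)` by comparing degrees. A proper subfield `k` of `⋃ ℚ(αₙ)` misses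
some `αₙ`, hence contains a largest `αₘ`, and intersecting `k` with the levels of the tower
shows `k = ℚ(αₘ)`. Finally `αₙ` is an algebraic integer all of whose conjugates have absolute
value `αₙ`, so `h(αₙ) = log p / p^n → 0`, while `αₙ ∉ ℚ(αₘ)` for `n > m`.
-/

open Polynomial Module

theorem Nat.Prime.rat_pow_ne_self {p : ℕ} (hp : p.Prime) (b : ℚ) : b ^ p ≠ p := by
  intro hb
  have hval := congrArg (padicValRat p) hb
  have : Fact p.Prime := ⟨hp⟩
  rw [padicValRat.pow, padicValRat.self hp.one_lt] at hval
  have := Int.eq_one_of_mul_eq_one_right (Int.natCast_nonneg p) hval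
  exact hp.ne_one (by exact_mod_cast this)

theorem IntermediateField.relfinrank_eq_natDegree_minpoly {F E : Type*} [Field F] [Field E]
    [Algebra F E] {K : IntermediateField F E} {x : E} (hx : IsIntegral F x) (hK : K ≤ F⟮x⟯) :
    relfinrank K F⟮x⟯ = (minpoly K x).natDegree := by
  rw [relfinrank_eq_finrank_of_le hK, extendScalars_adjoin hK, adjoin.finrank hx.tower_top]

theorem IntermediateField.adjoin_ofReal_subset_range (a : ℝ) :
    (ℚ⟮(a : ℂ)⟯ : Set ℂ) ⊆ Set.range ((↑) : ℝ → ℂ) := by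
  have : ℚ⟮(a : ℂ)⟯ ≤ (⊥ : IntermediateField ℝ ℂ).restrictScalars ℚ :=
    adjoin_simple_le_iff.mpr (mem_bot.mpr ⟨a, rfl⟩)
  exact fun z hz => mem_bot.mp (this hz)

theorem norm_algebraMap_norm_gen_of_pow_eq {k : Type*} [Field k] [Algebra k ℂ] {α : ℂ} {N : ℕ}
    (hN : N ≠ 0) {c : k} (hα : α ^ N = algebraMap k ℂ c) :
    ‖algebraMap k ℂ (Algebra.norm k (AdjoinSimple.gen k α))‖ =
      ‖α‖ ^ (minpoly k α).natDegree := by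
  have hconj : ∀ β ∈ (minpoly k α).aroots ℂ, ‖β‖ = ‖α‖ := by
    intro β hβ
    have hdvd : minpoly k α ∣ X ^ N - C c := minpoly.dvd k α (by simp [hα])
    have hβN : β ^ N = α ^ N := by
      simpa [hα, sub_eq_zero] using
        aeval_eq_zero_of_dvd_aeval_eq_zero hdvd (mem_aroots.mp hβ).2
    rw [← pow_left_inj₀ (norm_nonneg β) (norm_nonneg α) hN, ← norm_pow, ← norm_pow, hβN]
  rw [AdjoinSimple.norm_gen_eq_prod_roots α (IsAlgClosed.splits _), ← normHom_apply,
    map_multiset_prod, Multiset.map_congr rfl (by simpa using hconj), Multiset.map_const',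
    Multiset.prod_replicate, IsAlgClosed.card_aroots_eq_natDegree]

theorem ofReal_norm_pow_natDegree_minpoly_mem {k : IntermediateField ℚ ℂ}
    (hk : (k : Set ℂ) ⊆ Set.range ((↑) : ℝ → ℂ)) {α : ℂ} {N : ℕ} (hN : N ≠ 0) {q : ℚ}
    (hα : α ^ N = q) : ((‖α‖ ^ (minpoly k α).natDegree : ℝ) : ℂ) ∈ k := by
  set ν : k := Algebra.norm k (AdjoinSimple.gen k α)
  obtain ⟨r, hr⟩ := hk ν.2
  have hnorm : |r| = ‖α‖ ^ (minpoly k α).natDegree := by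
    rw [← Real.norm_eq_abs, ← Complex.norm_real, hr,
      ← norm_algebraMap_norm_gen_of_pow_eq hN (c := (q : k)) (by simpa using hα)]
    rfl
  rcases abs_choice r with h | h
  · rw [← hnorm, h, hr]
    exact ν.2
  · rw [← hnorm, h, Complex.ofReal_neg, hr]
    exact neg_mem ν.2

theorem Complex.log_max_one_norm_of_pow_eq {z : ℂ} {m a : ℕ} (hm : m ≠ 0) (ha : a ≠ 0)
    (h : z ^ m = a) : Real.log (max 1 ‖z‖) = Real.log a / m := by
  have hnorm : ‖z‖ ^ m = a := by rw [← norm_pow, h, Complex.norm_natCast]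
  have hone : 1 ≤ ‖z‖ := (one_le_pow_iff_of_nonneg (norm_nonneg z) hm).mp
    (hnorm ▸ Nat.one_le_cast.mpr (Nat.one_le_iff_ne_zero.mpr ha))
  rw [max_eq_right hone, ← hnorm, Real.log_pow]
  field_simp

namespace RelBogomolov

theorem nfHeight_eq_of_isIntegral {K : Type*} [Field K] [NumberField K] {x : K}
    (hx : IsIntegral ℤ x) {c : ℝ} (hc : ∀ w : InfinitePlace K, Real.log (max 1 (w x)) = c) :
    nfHeight K x = c := by
  have hK : (finrank ℚ K : ℝ) ≠ 0 := by exact_mod_cast Module.finrank_pos.ne'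
  simp only [nfHeight, denomIdeal_eq_top hx, Ideal.absNorm_top, Nat.cast_one, Real.log_one,
    add_zero, hc, ← Finset.sum_mul, ← Nat.cast_sum, InfinitePlace.sum_mult_eq]
  field_simp

theorem algHeight_of_pow_eq_natCast_s16 {x : ℂ} {m a : ℕ} (hm : m ≠ 0) (ha : a ≠ 0)
    (h : x ^ m = a) : algHeight x = Real.log a / m := by
  have hx : IsIntegral ℤ x := .of_pow (Nat.pos_of_ne_zero hm) (h ▸ isIntegral_natCast a)
  have hgen : AdjoinSimple.gen ℚ x ^ m = a := Subtype.ext (by simpa using h)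
  have hgen_int : IsIntegral ℤ (AdjoinSimple.gen ℚ x) :=
    .of_pow (Nat.pos_of_ne_zero hm) (hgen ▸ isIntegral_natCast a)
  rw [algHeight, dif_pos hx.tower_top]
  have : FiniteDimensional ℚ ℚ⟮x⟯ := adjoin.finiteDimensional hx.tower_top
  have : NumberField ℚ⟮x⟯ := ⟨⟩
  refine nfHeight_eq_of_isIntegral hgen_int fun w => ?_
  rw [← InfinitePlace.norm_embedding_eq]
  exact Complex.log_max_one_norm_of_pow_eq hm ha (by rw [← map_pow, hgen, map_natCast])

end RelBogomolov

namespace PrimeRootTower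

def root (p n : ℕ) : ℝ := (p : ℝ) ^ ((p : ℝ) ^ n)⁻¹

def level (p n : ℕ) : IntermediateField ℚ ℂ := ℚ⟮(root p n : ℂ)⟯

theorem root_zero (p : ℕ) : root p 0 = p := by simp [root]

variable {p : ℕ} [hp : Fact p.Prime]

theorem root_pos (n : ℕ) : 0 < root p n :=
  Real.rpow_pos_of_pos (Nat.cast_pos.mpr hp.out.pos) _

theorem root_pow_pow_sub {i j : ℕ} (h : i ≤ j) : root p j ^ p ^ (j - i) = root p i := by
  obtain ⟨d, rfl⟩ := Nat.exists_eq_add_of_le h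
  have hp0 : (p : ℝ) ≠ 0 := Nat.cast_ne_zero.mpr hp.out.ne_zero
  rw [Nat.add_sub_cancel_left, root, root, ← Real.rpow_natCast,
    ← Real.rpow_mul (Nat.cast_nonneg p)]
  congr 1
  push_cast
  field_simp
  ring

theorem root_pow_pow (n : ℕ) : root p n ^ p ^ n = p := by
  simpa [root_zero] using root_pow_pow_sub (p := p) (Nat.zero_le n)

theorem ofReal_root_pow_pow (n : ℕ) : (root p n : ℂ) ^ p ^ n = p := by
  rw [← Complex.ofReal_pow, root_pow_pow, Complex.ofReal_natCast]

theorem root_mem_of_le {k : IntermediateField ℚ ℂ} {i j : ℕ} (h : i ≤ j)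
    (hj : (root p j : ℂ) ∈ k) : (root p i : ℂ) ∈ k := by
  rw [← root_pow_pow_sub h, Complex.ofReal_pow]
  exact pow_mem hj _

theorem level_mono : Monotone (level p) := fun _ _ h =>
  adjoin_simple_le_iff.mpr (root_mem_of_le h (mem_adjoin_simple_self ℚ _))

theorem isIntegral_root (n : ℕ) : IsIntegral ℚ (root p n : ℂ) :=
  .of_pow (pow_pos hp.out.pos n) (ofReal_root_pow_pow (p := p) n ▸ isIntegral_natCast p)

instance (n : ℕ) : FiniteDimensional ℚ (level p n) :=
  adjoin.finiteDimensional (isIntegral_root n)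

theorem minpoly_root (hp2 : p ≠ 2) (n : ℕ) :
    minpoly ℚ (root p n : ℂ) = X ^ p ^ n - C (p : ℚ) := by
  refine (minpoly.eq_of_irreducible_of_monic
    (X_pow_sub_C_irreducible_of_prime_pow hp.out hp2 n hp.out.rat_pow_ne_self) ?_ ?_).symm
  · simp [ofReal_root_pow_pow]
  · exact monic_X_pow_sub_C _ (pow_ne_zero n hp.out.ne_zero)

theorem finrank_level (hp2 : p ≠ 2) (n : ℕ) : finrank ℚ (level p n) = p ^ n := by
  rw [level, adjoin.finrank (isIntegral_root n), minpoly_root hp2, natDegree_X_pow_sub_C]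

theorem level_le_level_iff (hp2 : p ≠ 2) {i j : ℕ} : level p i ≤ level p j ↔ i ≤ j := by
  refine ⟨fun h => ?_, fun h => level_mono h⟩
  have := finrank_le_of_le_right h
  rwa [finrank_level hp2, finrank_level hp2, Nat.pow_le_pow_iff_right hp.out.one_lt] at this

theorem eq_level_of_le_level (hp2 : p ≠ 2) {k : IntermediateField ℚ ℂ} {n : ℕ}
    (hk : k ≤ level p n) : ∃ j, k = level p j := by
  have hdeg : finrank ℚ k * relfinrank k (level p n) = p ^ n := by
    rw [finrank_bot_mul_relfinrank hk, finrank_level hp2]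
  obtain ⟨j, hjn, hkj⟩ := (Nat.dvd_prime_pow hp.out).mp (Dvd.intro _ hdeg)
  have hrel : relfinrank k (level p n) = p ^ (n - j) := by
    rw [hkj, ← pow_mul_pow_sub p hjn] at hdeg
    exact Nat.eq_of_mul_eq_mul_left (pow_pos hp.out.pos j) hdeg
  -- `N_{ℚ(αₙ)/k}(αₙ) = ±αⱼ`
  have hroot : (root p j : ℂ) ∈ k := by
    have := ofReal_norm_pow_natDegree_minpoly_mem
      (fun z hz => adjoin_ofReal_subset_range _ (hk hz)) (pow_ne_zero n hp.out.ne_zero)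
      (q := p) (by simpa using ofReal_root_pow_pow (p := p) n)
    rwa [← relfinrank_eq_natDegree_minpoly (isIntegral_root n) hk, ← level, hrel,
      Complex.norm_real, Real.norm_of_nonneg (root_pos n).le, root_pow_pow_sub hjn] at this
  have : FiniteDimensional ℚ k := Module.finite_of_finrank_pos (hkj ▸ pow_pos hp.out.pos j)
  refine ⟨j, (eq_of_le_of_finrank_eq (adjoin_simple_le_iff.mpr hroot) ?_).symm⟩
  rw [hkj, ← finrank_level hp2 j]
  rfl

theorem mem_iSup_level_iff {x : ℂ} : x ∈ ⨆ n, level p n ↔ ∃ n, x ∈ level p n := by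
  rw [← SetLike.mem_coe, coe_iSup_of_directed level_mono.directed_le, Set.mem_iUnion]
  rfl

theorem eq_level_of_lt_iSup (hp2 : p ≠ 2) {k : IntermediateField ℚ ℂ}
    (hk : k < ⨆ n, level p n) : ∃ m, k = level p m := by
  obtain ⟨n, hn⟩ : ∃ n, (root p n : ℂ) ∉ k := by
    by_contra! h
    exact hk.not_ge (iSup_le fun n => adjoin_simple_le_iff.mpr (h n))
  have hroot_zero : (root p 0 : ℂ) ∈ k := by
    rw [root_zero]
    exact_mod_cast IntermediateField.natCast_mem k p
  set m := Nat.findGreatest (fun i => (root p i : ℂ) ∈ k) n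
  have hm : (root p m : ℂ) ∈ k :=
    Nat.findGreatest_spec (P := fun i => (root p i : ℂ) ∈ k) (Nat.zero_le n) hroot_zero
  have hmax : ∀ i, (root p i : ℂ) ∈ k → i ≤ m := fun i hi =>
    Nat.le_findGreatest (not_lt.mp fun hni => hn (root_mem_of_le hni.le hi)) hi
  refine ⟨m, le_antisymm (fun x hx => ?_) (adjoin_simple_le_iff.mpr hm)⟩
  obtain ⟨N, hxN⟩ := mem_iSup_level_iff.mp (hk.le hx)
  obtain ⟨j, hj⟩ := eq_level_of_le_level hp2 (inf_le_right : k ⊓ level p N ≤ level p N)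
  have hjk : (root p j : ℂ) ∈ k ⊓ level p N := hj ▸ mem_adjoin_simple_self ℚ _
  exact level_mono (hmax j hjk.1) (hj ▸ ⟨hx, hxN⟩)

theorem algHeight_root (n : ℕ) : algHeight (root p n) = Real.log p / p ^ n := by
  rw [algHeight_of_pow_eq_natCast_s16 (pow_ne_zero n hp.out.ne_zero) hp.out.ne_zero
    (by simpa using ofReal_root_pow_pow (p := p) n)]
  push_cast
  rfl

theorem not_isBogomolovExtension_level_iSup (hp2 : p ≠ 2) (m : ℕ) :
    ¬ IsBogomolovExtension (level p m) (⨆ n, level p n) := by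
  rintro ⟨ε, hε, hsmall⟩
  have hp1 : (1 : ℝ) < p := Nat.one_lt_cast.mpr hp.out.one_lt
  have hpow (N : ℕ) : (0 : ℝ) < p ^ N := pow_pos (zero_lt_one.trans hp1) N
  obtain ⟨N, hmN, hN⟩ := ((Filter.eventually_gt_atTop m).and
    ((tendsto_pow_atTop_atTop_of_one_lt hp1).eventually_gt_atTop (Real.log p / ε))).exists
  have hheight : 0 < algHeight (root p N) ∧ algHeight (root p N) < ε := by
    rw [algHeight_root]
    refine ⟨div_pos (Real.log_pos hp1) (hpow N), ?_⟩
    rwa [div_lt_iff₀ (hpow N), mul_comm, ← div_lt_iff₀ hε]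
  have hmem := hsmall _ (mem_iSup_level_iff.mpr ⟨N, mem_adjoin_simple_self ℚ _⟩)
    (Complex.ofReal_ne_zero.mpr (root_pos N).ne') hheight.1 hheight.2
  exact hmN.not_ge ((level_le_level_iff hp2).mp (adjoin_simple_le_iff.mpr hmem))

end PrimeRootTower

open PrimeRootTower in
/-- For `K = ⋃_n ℚ(3^{1/3^n})` with compatibly chosen (positive real) roots, every proper
subfield of `K` equals `ℚ(3^{1/3^i})` for some `i`, hence is finite over `ℚ`; consequently
`K` is not a Bogomolov extension of any proper subfield of itself. -/
theorem proper_subfields_of_cubic_tower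
    (K : IntermediateField ℚ ℂ)
    (hK : K = ⨆ n : ℕ, ℚ⟮((((3 : ℝ) ^ (((3 : ℝ) ^ (n + 1 : ℕ))⁻¹) : ℝ) : ℂ))⟯) :
    ∀ k : IntermediateField ℚ ℂ, k ≤ K → k ≠ K →
      (∃ i : ℕ, k = ℚ⟮((((3 : ℝ) ^ (((3 : ℝ) ^ (i : ℕ))⁻¹) : ℝ) : ℂ))⟯) ∧
      FiniteDimensional ℚ ↥k ∧
      ¬ IsBogomolovExtension k K := by
  intro k hkK hne
  have hlevel (n : ℕ) : level 3 n = ℚ⟮((((3 : ℝ) ^ (((3 : ℝ) ^ n)⁻¹) : ℝ) : ℂ))⟯ := by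
    simp [level, root]
  have hK' : K = ⨆ n, level 3 n := by
    rw [hK, ← level_mono.iSup_nat_add 1]
    simp only [hlevel]
  obtain ⟨m, rfl⟩ := eq_level_of_lt_iSup (by norm_num) (hK' ▸ lt_of_le_of_ne hkK hne)
  exact ⟨⟨m, hlevel m⟩, inferInstance, hK' ▸ not_isBogomolovExtension_level_iSup (by norm_num) m⟩
end
end
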